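/- arXiv:1312.5699 — 2 statements merged into one kernel-verified Lean document; each statement's English description precedes it below -/
import Mathlib

section
/- In a first-quadrant spectral sequence of bialgebras over a field, the shortest nonzero differential (in lowest total degree) maps an indecomposable element to a primitive element. -/
/-!
Let `x ∈ 𝒜 n` with `d x ≠ 0`, `n` minimal. By the Leibniz rule `d` kills every product of two
elements of positive degree adding up to `n`, since both factors lie below degree `n`; so `d` kills
the degree-`n` part of every decomposable element, and `x` is indecomposable.

Dually, `Δ x = x ⊗ 1 + 1 ⊗ x + Σ x' ⊗ x''` with `x', x''` of positive degree, and the coderivation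
`d ⊗ 1 + 1 ⊗ d` kills each `x' ⊗ x''` and sends `x ⊗ 1 + 1 ⊗ x` to `d x ⊗ 1 + 1 ⊗ d x`. Rather than
splitting `Δ x` into bihomogeneous pieces, we compare `d ⊗ 1 + 1 ⊗ d` on bidegree-`n` tensors with
`t ↦ d ((1 ⊗ ε) t) ⊗ 1 + 1 ⊗ d ((ε ⊗ 1) t)`, which the counit axioms evaluate at `Δ x`.
-/

open TensorProduct

section Derivation

variable {k A : Type*} [CommRing k] [Ring A] [Algebra k A]

def IsGradedDerivation (𝒜 : ℕ → Submodule k A) (d : A →ₗ[k] A) : Prop :=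
  ∀ (i : ℕ) (a b : A), a ∈ 𝒜 i → d (a * b) = d a * b + ((-1 : ℤ) ^ i) • (a * d b)

variable {𝒜 : ℕ → Submodule k A} {d : A →ₗ[k] A}

theorem IsGradedDerivation.map_one [SetLike.GradedOne 𝒜] (hd : IsGradedDerivation 𝒜 d) :
    d 1 = 0 := by
  simpa using hd 0 1 1 SetLike.GradedOne.one_mem

variable [GradedAlgebra 𝒜] {n : ℕ}

theorem IsGradedDerivation.map_proj_eq_zero_of_mem_mul (hd : IsGradedDerivation 𝒜 d)
    (hmin : ∀ m < n, ∀ a ∈ 𝒜 m, d a = 0) {y : A}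
    (hy : y ∈ (⨆ (m : ℕ) (_ : 0 < m), 𝒜 m) * (⨆ (m : ℕ) (_ : 0 < m), 𝒜 m)) :
    d (GradedAlgebra.proj 𝒜 n y) = 0 := by
  suffices h : (⨆ (m : ℕ) (_ : 0 < m), 𝒜 m) * (⨆ (m : ℕ) (_ : 0 < m), 𝒜 m) ≤
      LinearMap.ker (d ∘ₗ GradedAlgebra.proj 𝒜 n) from h hy
  simp only [Submodule.iSup_mul, Submodule.mul_iSup]
  refine iSup₂_le fun j hj => iSup₂_le fun i hi => Submodule.mul_le.mpr fun a ha b hb => ?_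
  have hab : a * b ∈ 𝒜 (i + j) := SetLike.mul_mem_graded ha hb
  rw [LinearMap.mem_ker, LinearMap.comp_apply, GradedAlgebra.proj_apply]
  by_cases hij : i + j = n
  · rw [DirectSum.decompose_of_mem_same 𝒜 (hij ▸ hab), hd i a b ha, hmin i (by omega) a ha,
      hmin j (by omega) b hb, zero_mul, mul_zero, smul_zero, add_zero]
  · rw [DirectSum.decompose_of_mem_ne 𝒜 hab hij, map_zero]

theorem IsGradedDerivation.notMem_mul (hd : IsGradedDerivation 𝒜 d)
    (hmin : ∀ m < n, ∀ a ∈ 𝒜 m, d a = 0) {x : A} (hx : x ∈ 𝒜 n) (hdx : d x ≠ 0) :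
    x ∉ (⨆ (m : ℕ) (_ : 0 < m), 𝒜 m) * (⨆ (m : ℕ) (_ : 0 < m), 𝒜 m) := fun hmem => by
  have := hd.map_proj_eq_zero_of_mem_mul hmin hmem
  rw [GradedAlgebra.proj_apply, DirectSum.decompose_of_mem_same 𝒜 hx] at this
  exact hdx this

end Derivation

section Coderivation

variable {k A : Type*} [CommRing k] [Ring A] [Bialgebra k A] {𝒜 : ℕ → Submodule k A}
  {d : A →ₗ[k] A} {n : ℕ}

local notation "ε" => Coalgebra.counit (R := k) (A := A)

theorem map_tmul_add_tmul_map_of_mem (hconn : 𝒜 0 = 1) (hd1 : d 1 = 0)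
    (hmin : ∀ m < n, ∀ a ∈ 𝒜 m, d a = 0) {i j : ℕ} (hij : i + j = n) {a b : A}
    (ha : a ∈ 𝒜 i) (hb : b ∈ 𝒜 j) :
    d a ⊗ₜ[k] b + a ⊗ₜ[k] d b = ε b • (d a ⊗ₜ[k] (1 : A)) + ε a • ((1 : A) ⊗ₜ[k] d b) := by
  rcases Nat.eq_zero_or_pos i with rfl | hi
  · rw [hconn] at ha
    obtain ⟨c, rfl⟩ := Submodule.mem_one.mp ha
    simp [Algebra.algebraMap_eq_smul_one, hd1, smul_tmul']
  rcases Nat.eq_zero_or_pos j with rfl | hj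
  · rw [hconn] at hb
    obtain ⟨c, rfl⟩ := Submodule.mem_one.mp hb
    simp [Algebra.algebraMap_eq_smul_one, hd1, smul_tmul']
  simp [hmin i (by omega) a ha, hmin j (by omega) b hb]

theorem map_add_map_eq_of_mem_iSup (hconn : 𝒜 0 = 1) (hd1 : d 1 = 0)
    (hmin : ∀ m < n, ∀ a ∈ 𝒜 m, d a = 0) {t : A ⊗[k] A}
    (ht : t ∈ ⨆ (q : ℕ × ℕ) (_ : q.1 + q.2 = n),
      LinearMap.range (TensorProduct.map (𝒜 q.1).subtype (𝒜 q.2).subtype)) :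
    map d LinearMap.id t + map LinearMap.id d t =
      d (TensorProduct.rid k A (LinearMap.lTensor A ε t)) ⊗ₜ[k] (1 : A) +
        (1 : A) ⊗ₜ[k] d (TensorProduct.lid k A (LinearMap.rTensor A ε t)) := by
  let D : A ⊗[k] A →ₗ[k] A ⊗[k] A := map d LinearMap.id + map LinearMap.id d
  let P : A ⊗[k] A →ₗ[k] A ⊗[k] A :=
    (mk k A A).flip 1 ∘ₗ d ∘ₗ (TensorProduct.rid k A).toLinearMap ∘ₗ LinearMap.lTensor A ε +
      mk k A A 1 ∘ₗ d ∘ₗ (TensorProduct.lid k A).toLinearMap ∘ₗ LinearMap.rTensor A ε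
  suffices h : (⨆ (q : ℕ × ℕ) (_ : q.1 + q.2 = n),
      LinearMap.range (TensorProduct.map (𝒜 q.1).subtype (𝒜 q.2).subtype)) ≤
      LinearMap.eqLocus D P from h ht
  refine iSup₂_le fun ⟨i, j⟩ hij => ?_
  rintro _ ⟨s, rfl⟩
  suffices h : D ∘ₗ map (𝒜 i).subtype (𝒜 j).subtype = P ∘ₗ map (𝒜 i).subtype (𝒜 j).subtype from
    LinearMap.congr_fun h s
  refine TensorProduct.ext' fun a b => ?_
  simpa [D, P] using map_tmul_add_tmul_map_of_mem hconn hd1 hmin hij a.2 b.2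

theorem comul_map_eq_of_forall_lt (hconn : 𝒜 0 = 1) (hd1 : d 1 = 0)
    (hmin : ∀ m < n, ∀ a ∈ 𝒜 m, d a = 0) {x : A}
    (hcomul : Coalgebra.comul (R := k) x ∈ ⨆ (q : ℕ × ℕ) (_ : q.1 + q.2 = n),
      LinearMap.range (TensorProduct.map (𝒜 q.1).subtype (𝒜 q.2).subtype))
    (hcoder : Coalgebra.comul (R := k) (d x) =
      map d LinearMap.id (Coalgebra.comul (R := k) x) +
        map LinearMap.id d (Coalgebra.comul (R := k) x)) :
    Coalgebra.comul (R := k) (d x) = d x ⊗ₜ[k] 1 + 1 ⊗ₜ[k] d x := by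
  rw [hcoder, map_add_map_eq_of_mem_iSup hconn hd1 hmin hcomul, Coalgebra.lTensor_counit_comul,
    Coalgebra.rTensor_counit_comul, TensorProduct.rid_tmul, TensorProduct.lid_tmul, one_smul]

end Coderivation

/-- In a spectral sequence of connected graded bialgebras over a field, the
shortest nonzero differential (a biderivation `d`, nonzero in lowest total
degree `n`) sends some indecomposable element to a primitive element. -/
theorem stmt_12 (k : Type*) [Field k]
    (A : Type*) [Ring A] [Bialgebra k A]
    (𝒜 : ℕ → Submodule k A) [SetLike.GradedMonoid 𝒜] [DirectSum.Decomposition 𝒜]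
    (hconn : 𝒜 0 = (1 : Submodule k A))
    (hcomul : ∀ n : ℕ, ∀ x ∈ 𝒜 n,
      Coalgebra.comul (R := k) x ∈
        ⨆ (q : ℕ × ℕ) (_ : q.1 + q.2 = n),
          LinearMap.range (TensorProduct.map (𝒜 q.1).subtype (𝒜 q.2).subtype))
    (d : A →ₗ[k] A)
    (hder : ∀ (i : ℕ) (a b : A), a ∈ 𝒜 i →
      d (a * b) = d a * b + ((-1 : ℤ) ^ i) • (a * d b))
    (hcoder : ∀ x : A,
      Coalgebra.comul (R := k) (d x)
        = TensorProduct.map d LinearMap.id (Coalgebra.comul (R := k) x)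
          + TensorProduct.map LinearMap.id d (Coalgebra.comul (R := k) x))
    (n : ℕ) (hmin : ∀ m : ℕ, m < n → ∀ x ∈ 𝒜 m, d x = 0)
    (hne : ∃ x ∈ 𝒜 n, d x ≠ 0) :
    ∃ x ∈ 𝒜 n, d x ≠ 0
      ∧ x ∉ ((⨆ (m : ℕ) (_ : 0 < m), 𝒜 m) * (⨆ (m : ℕ) (_ : 0 < m), 𝒜 m) :
          Submodule k A)
      ∧ Coalgebra.comul (R := k) (d x) = d x ⊗ₜ[k] 1 + 1 ⊗ₜ[k] d x := by
  let _ : GradedAlgebra 𝒜 := {}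
  obtain ⟨x, hx, hdx⟩ := hne
  have hd1 : d 1 = 0 := IsGradedDerivation.map_one hder
  exact ⟨x, hx, hdx, IsGradedDerivation.notMem_mul hder hmin hx hdx,
    comul_map_eq_of_forall_lt hconn hd1 hmin (hcomul n x hx) (hcoder x)⟩
end

section
/- Let x and r_1, r_2, ... be elements of a differential graded algebra with d(γ_p(x)) = ∑_i r_i d(γ_p(t_i)) for cycles r_i and divided power elements t_i. Then the elements γ_{p^l}(x') defined by x' = x - ∑_i r_i γ_p-corrections, specifically γ_{p^l}(x') = ∑_{j=0}^{p^{l-1}} (-1)^j γ_{p^l - pj}(x) ∑_{|α|=j} ∏_i r_i^{α_i} γ_{pα_i}(t_i), are cycles. -/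
/-!
Put `u_j = γ_{p^l - pj}(x)`, `S_j = ∑_{|α| = j} ∏_i r_i^{α_i} γ_{pα_i}(t_i)` and
`C = ∑_i r_i d(γ_p(t_i))`. The differential lowers both indices at the cost of the same factor:
`d u_j = C u_{j+1}`, and `d S_{j+1} = C S_j` because `d` is a derivation and each factor
satisfies `d(r_i^{k+1} γ_{p(k+1)}(t_i)) = r_i d(γ_p(t_i)) · r_i^k γ_{pk}(t_i)`. So in
`d(∑_j (-1)^j u_j S_j)` the terms `(-1)^j C u_{j+1} S_j` and `(-1)^{j+1} u_{j+1} C S_j` cancel,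
while the boundary terms `d u_{p^{l-1}} = d γ_0(x)` and `d S_0 = d ∏_i γ_0(t_i)` vanish.
-/

open Finset

section HomogeneousSum

variable {ι A : Type*} [DecidableEq ι] [CommSemiring A]

/-- The degree-`j` part `∑_{|α| = j} ∏_{i ∈ s} g i (α i)` of the product `∏_{i ∈ s} ∑_k g i k`. -/
def homogeneousSum (s : Finset ι) (g : ι → ℕ → A) (j : ℕ) : A :=
  ∑ α ∈ s.piAntidiag j, ∏ i ∈ s, g i (α i)

lemma homogeneousSum_zero (s : Finset ι) (g : ι → ℕ → A) :
    homogeneousSum s g 0 = ∏ i ∈ s, g i 0 := by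
  simp [homogeneousSum]

lemma homogeneousSum_cons (g : ι → ℕ → A) {i : ι} {s : Finset ι} (hi : i ∉ s) (j : ℕ) :
    homogeneousSum (cons i s hi) g j =
      ∑ ab ∈ antidiagonal j, g i ab.1 * homogeneousSum s g ab.2 := by
  rw [homogeneousSum, piAntidiag_cons, sum_disjiUnion]
  refine sum_congr rfl fun ab _ => ?_
  rw [sum_map, homogeneousSum, mul_sum]
  refine sum_congr rfl fun α hα => ?_
  have hαi : α i = 0 := by
    by_contra h
    exact hi ((mem_piAntidiag.mp hα).2 i h)
  have hs : ∀ t ∈ s, t ≠ i := fun t ht h => hi (h ▸ ht)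
  rw [prod_cons, addRightEmbedding_apply]
  simp only [Pi.add_apply, hαi, if_true, zero_add]
  exact congrArg _ (prod_congr rfl fun t ht => by simp [hs t ht])

end HomogeneousSum

namespace Derivation

section CommSemiring

variable {R A : Type*} [CommSemiring R] [CommSemiring A] [Algebra R A] (D : Derivation R A A)

lemma leibniz_mul (a b : A) : D (a * b) = D a * b + a * D b := by
  rw [leibniz, smul_eq_mul, smul_eq_mul]
  ring

lemma map_prod_eq_zero {ι : Type*} (s : Finset ι) (f : ι → A) (hf : ∀ i ∈ s, D (f i) = 0) :
    D (∏ i ∈ s, f i) = 0 :=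
  prod_induction f (fun a => D a = 0) (fun a b ha hb => by simp [leibniz, ha, hb])
    D.map_one_eq_zero hf

lemma map_pow_eq_zero {a : A} (ha : D a = 0) (n : ℕ) : D (a ^ n) = 0 := by
  simp [leibniz_pow, ha]

variable {ι : Type*} [DecidableEq ι] {g : ι → ℕ → A} {c : ι → A}

lemma map_homogeneousSum_zero (h0 : ∀ i, D (g i 0) = 0) (s : Finset ι) :
    D (homogeneousSum s g 0) = 0 := by
  rw [homogeneousSum_zero]
  exact D.map_prod_eq_zero s _ fun i _ => h0 i

lemma map_homogeneousSum_succ (h0 : ∀ i, D (g i 0) = 0)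
    (hsucc : ∀ i k, D (g i (k + 1)) = c i * g i k) (s : Finset ι) (j : ℕ) :
    D (homogeneousSum s g (j + 1)) = (∑ i ∈ s, c i) * homogeneousSum s g j := by
  induction s using Finset.cons_induction generalizing j with
  | empty => simp [homogeneousSum]
  | cons i s hi ih =>
    have hDg : ∑ ab ∈ antidiagonal (j + 1), D (g i ab.1) * homogeneousSum s g ab.2 =
        c i * ∑ ab ∈ antidiagonal j, g i ab.1 * homogeneousSum s g ab.2 := by
      rw [Nat.sum_antidiagonal_succ, h0, zero_mul, zero_add, mul_sum]
      exact sum_congr rfl fun ab _ => by rw [hsucc]; ring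
    have hDS : ∑ ab ∈ antidiagonal (j + 1), g i ab.1 * D (homogeneousSum s g ab.2) =
        (∑ t ∈ s, c t) * ∑ ab ∈ antidiagonal j, g i ab.1 * homogeneousSum s g ab.2 := by
      rw [Nat.sum_antidiagonal_succ', map_homogeneousSum_zero D h0, mul_zero, zero_add, mul_sum]
      exact sum_congr rfl fun ab _ => by rw [ih]; ring
    rw [homogeneousSum_cons g hi, map_sum, sum_congr rfl fun ab _ => D.leibniz_mul _ _,
      sum_add_distrib, hDg, hDS, sum_cons, homogeneousSum_cons g hi]
    ring

lemma map_pow_mul_apply_mul_succ {r : A} (hr : D r = 0) {t : ℕ → A} {p : ℕ}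
    (ht : ∀ m, D (t (p + m)) = D (t p) * t m) (k : ℕ) :
    D (r ^ (k + 1) * t (p * (k + 1))) = r * D (t p) * (r ^ k * t (p * k)) := by
  rw [D.leibniz_mul, D.map_pow_eq_zero hr, mul_add_one, add_comm (p * k), ht, pow_succ]
  ring

end CommSemiring

lemma map_sum_neg_one_pow_mul_eq_zero {R A : Type*} [CommSemiring R] [CommRing A] [Algebra R A]
    (D : Derivation R A A) {C : A} {u S : ℕ → A} {n : ℕ}
    (hu : ∀ j < n, D (u j) = C * u (j + 1)) (hun : D (u n) = 0)
    (hS0 : D (S 0) = 0) (hS : ∀ j, D (S (j + 1)) = C * S j) :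
    D (∑ j ∈ range (n + 1), (-1) ^ j * (u j * S j)) = 0 := by
  have hterm (j : ℕ) : D ((-1) ^ j * (u j * S j)) =
      (-1) ^ j * (D (u j) * S j) + (-1) ^ j * (u j * D (S j)) := by
    rw [D.leibniz_mul, D.map_pow_eq_zero (by simp), D.leibniz_mul]
    ring
  rw [map_sum, sum_congr rfl fun j _ => hterm j, sum_add_distrib, sum_range_succ, hun,
    sum_range_succ', hS0]
  simp only [zero_mul, mul_zero, add_zero]
  rw [← sum_add_distrib]
  refine sum_eq_zero fun j hj => ?_
  rw [hu j (mem_range.mp hj), hS, pow_succ]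
  ring

end Derivation

theorem stmt_14_general (p : ℕ) [Fact p.Prime]
    (A : Type*) [CommRing A] [Algebra (ZMod p) A]
    (d : A →ₗ[ZMod p] A)
    (hLeibniz : ∀ a b : A, d (a * b) = d a * b + a * d b)
    (N : ℕ) (r : Fin N → A) (hr : ∀ i, d (r i) = 0)
    (γx : ℕ → A) (γt : Fin N → ℕ → A)
    (hdx : ∀ m : ℕ, d (γx (p + m)) = (∑ i, r i * d (γt i p)) * γx m)
    (hdx0 : ∀ m : ℕ, m < p → d (γx m) = 0)
    (hdt : ∀ i (m : ℕ), d (γt i (p + m)) = d (γt i p) * γt i m)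
    (hdt0 : ∀ i (m : ℕ), m < p → d (γt i m) = 0) :
    ∀ l : ℕ, 1 ≤ l →
      d (∑ j ∈ Finset.range (p ^ (l - 1) + 1),
          ∑ α ∈ Finset.Nat.antidiagonalTuple N j,
            ((-1 : A) ^ j) *
              (γx (p ^ l - p * j) * ∏ i, r i ^ α i * γt i (p * α i))) = 0 := by
  intro l hl
  obtain ⟨m, rfl⟩ : ∃ m, l = m + 1 := ⟨l - 1, by omega⟩
  have hp : 0 < p := (Fact.out : p.Prime).pos
  let D : Derivation (ZMod p) A A :=
    .mk' d fun a b => by rw [hLeibniz, smul_eq_mul, smul_eq_mul]; ring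
  let g (i : Fin N) (k : ℕ) : A := r i ^ k * γt i (p * k)
  have hg0 (i : Fin N) : D (g i 0) = 0 := by simpa [g, D] using hdt0 i 0 hp
  have hg (i : Fin N) (k : ℕ) : D (g i (k + 1)) = r i * d (γt i p) * g i k :=
    D.map_pow_mul_apply_mul_succ (hr i) (hdt i) k
  have hx (j : ℕ) (hj : j < p ^ m) : d (γx (p ^ (m + 1) - p * j)) =
      (∑ i, r i * d (γt i p)) * γx (p ^ (m + 1) - p * (j + 1)) := by
    have hle : p * (j + 1) ≤ p * p ^ m := Nat.mul_le_mul_left p hj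
    rw [← hdx, pow_succ']
    congr 2
    rw [mul_add_one] at hle ⊢
    omega
  have hx0 : d (γx (p ^ (m + 1) - p * p ^ m)) = 0 := by
    rw [← pow_succ', Nat.sub_self]
    exact hdx0 0 hp
  have hsum (j : ℕ) : ∑ α ∈ Finset.Nat.antidiagonalTuple N j,
      (-1 : A) ^ j * (γx (p ^ (m + 1) - p * j) * ∏ i, r i ^ α i * γt i (p * α i)) =
      (-1) ^ j * (γx (p ^ (m + 1) - p * j) * homogeneousSum univ g j) := by
    rw [homogeneousSum, piAntidiag_univ_fin_eq_antidiagonalTuple, mul_sum, mul_sum]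
  rw [Nat.add_sub_cancel, sum_congr rfl fun j _ => hsum j]
  exact D.map_sum_neg_one_pow_mul_eq_zero hx hx0
    (D.map_homogeneousSum_zero hg0 univ) (D.map_homogeneousSum_succ hg0 hg univ)

/-- Correcting divided powers to cycles: in an `F_p`-DGA containing divided
power families `γ_k(x)` and `γ_k(t_i)` with the differential a derivation
satisfying `d(γ_{p+k}(x)) = (∑_i r_i d(γ_p(t_i)))·γ_k(x)` and
`d(γ_{p+k}(t_i)) = d(γ_p(t_i))·γ_k(t_i)` for cycles `r_i`, the elements
`γ_{p^l}(x') = ∑_{j=0}^{p^{l-1}} (-1)^j γ_{p^l-pj}(x) ∑_{|α|=j} ∏_i r_i^{α_i}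
γ_{pα_i}(t_i)` are cycles. -/
theorem stmt_14 (p : ℕ) [Fact p.Prime]
    (A : Type*) [CommRing A] [Algebra (ZMod p) A]
    (d : A →ₗ[ZMod p] A)
    (hLeibniz : ∀ a b : A, d (a * b) = d a * b + a * d b)
    (N : ℕ) (r : Fin N → A) (hr : ∀ i, d (r i) = 0)
    (γx : ℕ → A) (γt : Fin N → ℕ → A)
    (hγt0 : ∀ i, γt i 0 = 1)
    (hγtmul : ∀ i (a b : ℕ), γt i a * γt i b = ((a + b).choose a) • γt i (a + b))
    (hdx : ∀ m : ℕ, d (γx (p + m)) = (∑ i, r i * d (γt i p)) * γx m)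
    (hdx0 : ∀ m : ℕ, m < p → d (γx m) = 0)
    (hdt : ∀ i (m : ℕ), d (γt i (p + m)) = d (γt i p) * γt i m)
    (hdt0 : ∀ i (m : ℕ), m < p → d (γt i m) = 0) :
    ∀ l : ℕ, 1 ≤ l →
      d (∑ j ∈ Finset.range (p ^ (l - 1) + 1),
          ∑ α ∈ Finset.Nat.antidiagonalTuple N j,
            ((-1 : A) ^ j) *
              (γx (p ^ l - p * j) * ∏ i, r i ^ α i * γt i (p * α i))) = 0 :=
  stmt_14_general p A d hLeibniz N r hr γx γt hdx hdx0 hdt hdt0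
end
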